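/- Fix a finite set $J \subset \mathbb{N}$, an integer $d$ with $1 \le d \le |J|$, and $j \in \mathbb{N} \setminus J$. If $p, q \in R_{J,d}$ satisfy $\phi_{J,d}(p) = \phi_{J,d}(q)$, then $\phi_{J\cup\{j\},\,d+1}(\eta_j(p)) = \phi_{J\cup\{j\},\,d+1}(\eta_j(q))$; that is, bracket polynomials that are equal in the bracket ring have lifts that are equal in the bracket ring. -/

import Mathlib

/-- The polynomial ring `R_{J,d}` over `ℂ` with one variable `X_S` for each `d`-element
subset `S ⊆ J`. -/
abbrev BracketRing (J : Finset ℕ) (d : ℕ) : Type :=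
  MvPolynomial {S : Finset ℕ // S ⊆ J ∧ S.card = d} ℂ

/-- The formal bracket `[λ₁ ⋯ λ_d] ∈ R_{J,d}`: zero if the entries are not pairwise
distinct, and otherwise `sign π • X_{{λ₁,…,λ_d}}` where `π` is the permutation sorting
the list into increasing order. -/
noncomputable def fbr (J : Finset ℕ) (d : ℕ) (lam : Fin d → ℕ) : BracketRing J d :=
  if h : Function.Injective lam ∧ ∀ k, lam k ∈ J then
    have hsub : Finset.image lam Finset.univ ⊆ J := by
      intro x hx
      obtain ⟨k, _, rfl⟩ := Finset.mem_image.mp hx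
      exact h.2 k
    have hcard : (Finset.image lam Finset.univ).card = d := by
      rw [Finset.card_image_of_injective _ h.1, Finset.card_univ, Fintype.card_fin]
    let e := (Finset.image lam Finset.univ).orderIsoOfFin hcard
    let π : Fin d → Fin d := fun k =>
      e.symm ⟨lam k, Finset.mem_image_of_mem _ (Finset.mem_univ k)⟩
    have hπ : Function.Bijective π := by
      apply Finite.injective_iff_bijective.mp
      intro p q hpq
      exact h.1 (congrArg Subtype.val (e.symm.injective hpq))
    ((Equiv.Perm.sign (Equiv.ofBijective π hπ) : ℤ)) •
      MvPolynomial.X ⟨Finset.image lam Finset.univ, hsub, hcard⟩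
  else 0

/-- The lift `η_j : R_{J,d} → R_{J∪{j},d+1}`, sending `X_S` (with
`S = {s₁ < ⋯ < s_d}`) to the formal bracket `[s₁ ⋯ s_d j]`. -/
noncomputable def liftEta (J : Finset ℕ) (d : ℕ) (j : ℕ) :
    BracketRing J d →ₐ[ℂ] BracketRing (insert j J) (d + 1) :=
  MvPolynomial.aeval (fun S : {S : Finset ℕ // S ⊆ J ∧ S.card = d} =>
    fbr (insert j J) (d + 1) (fun k =>
      if h : (k : ℕ) < d then S.1.orderEmbOfFin S.2.2 ⟨(k : ℕ), h⟩ else j))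

/-- The generic coordinatization `φ_{J,d}`, sending `X_S` (with `S = {s₁ < ⋯ < s_d}`) to
the determinant of the `d × d` matrix `(x_{i, s_m})`. -/
noncomputable def genCoord (J : Finset ℕ) (d : ℕ) :
    BracketRing J d →ₐ[ℂ] MvPolynomial (ℕ × ℕ) ℂ :=
  MvPolynomial.aeval (fun S : {S : Finset ℕ // S ⊆ J ∧ S.card = d} =>
    Matrix.det (Matrix.of fun i m : Fin d =>
      MvPolynomial.X ((i : ℕ), (S.1.orderEmbOfFin S.2.2 m : ℕ))))

/-!
Let `a = x_{d,j}`. Expanding the `(d+1) × (d+1)` bracket `[s₁ ⋯ s_d j]` by eliminating its last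
column against the pivot `a` (a Schur complement) writes it as `a` times the `d × d` determinant
with entries `x_{i,k} - x_{i,j} x_{d,k} / a`. Hence, after also scaling row `0` by `a`, a single
substitution of the variables `x_{i,k}` into the fraction field sends `φ_{J,d}(X_S)` to
`φ_{J∪{j},d+1}(η_j(X_S))` for every `S`. So `φ_{J∪{j},d+1} ∘ η_j`, followed by the injective
embedding into the fraction field, factors through `φ_{J,d}`.
-/

theorem Matrix.det_succ_eq_mul_det_schur {K : Type*} [Field K] {d : ℕ}
    (M : Matrix (Fin (d + 1)) (Fin (d + 1)) K) (ha : M (Fin.last d) (Fin.last d) ≠ 0) :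
    M.det = M (Fin.last d) (Fin.last d) * (Matrix.of fun i k : Fin d => M i.castSucc k.castSucc -
      M i.castSucc (Fin.last d) * M (Fin.last d) k.castSucc / M (Fin.last d) (Fin.last d)).det := by
  set a := M (Fin.last d) (Fin.last d)
  set c : Fin (d + 1) → K := Fin.lastCases 0 fun i => M i.castSucc (Fin.last d) / a
  let B : Matrix (Fin (d + 1)) (Fin (d + 1)) K :=
    Matrix.of fun i k => M i k - c i * M (Fin.last d) k
  have hB : M.det = B.det :=
    det_eq_of_forall_row_eq_smul_add_const c (Fin.last d) (by simp [c]) fun i k => by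
      simp [B, c]
  have hBcol : ∀ i : Fin d, B i.castSucc (Fin.last d) = 0 := fun i => by
    simp [B, c, a, div_mul_cancel₀ _ ha]
  rw [hB, det_succ_column B (Fin.last d), Fintype.sum_eq_single (Fin.last d)]
  · have hBlast : B (Fin.last d) (Fin.last d) = a := by simp [B, c, a]
    have hminor : B.submatrix (Fin.last d).succAbove (Fin.last d).succAbove =
        Matrix.of fun i k : Fin d => M i.castSucc k.castSucc -
          M i.castSucc (Fin.last d) * M (Fin.last d) k.castSucc / a := by
      ext i k
      simp [B, c, div_mul_eq_mul_div]
    rw [hBlast, hminor, ← two_mul, pow_mul, neg_one_sq, one_pow, one_mul]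
  · intro i hi
    obtain ⟨i, rfl⟩ := Fin.exists_castSucc_eq.mpr hi
    simp [hBcol]

open MvPolynomial

local notation "𝕂" => FractionRing (MvPolynomial (ℕ × ℕ) ℂ)

local notation "ι" => algebraMap (MvPolynomial (ℕ × ℕ) ℂ) 𝕂

noncomputable def schurSubst (d j : ℕ) : MvPolynomial (ℕ × ℕ) ℂ →ₐ[ℂ] 𝕂 :=
  aeval fun ik => (if ik.1 = 0 then ι (X (d, j)) else 1) *
    (ι (X ik) - ι (X (ik.1, j)) * ι (X (d, ik.2)) / ι (X (d, j)))

theorem schurSubst_det {d : ℕ} (hd : 0 < d) (j : ℕ) (s : Fin d → ℕ) :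
    schurSubst d j (Matrix.of fun i m : Fin d => X ((i : ℕ), s m)).det =
      ι (Matrix.of fun i m : Fin (d + 1) => X ((i : ℕ), Fin.snoc s j m)).det := by
  set a := ι (X (d, j))
  have ha : a ≠ 0 := (map_ne_zero_iff _ (IsFractionRing.injective _ _)).mpr (X_ne_zero _)
  have hrow : ∏ i : Fin d, (if (i : ℕ) = 0 then a else 1) = a := by
    rw [Fintype.prod_eq_single (⟨0, hd⟩ : Fin d) fun i hi => if_neg (Fin.val_ne_iff.mpr hi)]
    simp
  rw [AlgHom.map_det, RingHom.map_det, Matrix.det_succ_eq_mul_det_schur _ (by simp [a, ha])]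
  calc _ = (Matrix.of fun i m : Fin d => (if (i : ℕ) = 0 then a else 1) *
        (ι (X (i, s m)) - ι (X (i, j)) * ι (X (d, s m)) / a)).det := by
          congr 1; ext i m; simp [schurSubst, a]
    _ = a * (Matrix.of fun i m : Fin d =>
        ι (X (i, s m)) - ι (X (i, j)) * ι (X (d, s m)) / a).det := by
          simpa only [Matrix.of_apply, hrow] using Matrix.det_mul_column
            (fun i : Fin d => if (i : ℕ) = 0 then a else 1) (Matrix.of fun i m : Fin d =>
              ι (X (i, s m)) - ι (X (i, j)) * ι (X (d, s m)) / a)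
    _ = _ := by simp [a]

theorem genCoord_fbr {J : Finset ℕ} {d : ℕ} {lam : Fin d → ℕ}
    (hinj : Function.Injective lam) (hmem : ∀ k, lam k ∈ J) :
    genCoord J d (fbr J d lam) = (Matrix.of fun i m : Fin d => X ((i : ℕ), lam m)).det := by
  rw [fbr, dif_pos ⟨hinj, hmem⟩, map_zsmul, genCoord, aeval_X, zsmul_eq_mul,
    ← Matrix.det_permute']
  congr 1
  ext i m
  simp [← Finset.coe_orderIsoOfFin_apply]

theorem liftEta_X (J : Finset ℕ) (d j : ℕ) (S : {S : Finset ℕ // S ⊆ J ∧ S.card = d}) :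
    liftEta J d j (X S) =
      fbr (insert j J) (d + 1) (Fin.snoc (fun k => (S.1.orderEmbOfFin S.2.2 k : ℕ)) j) :=
  aeval_X _ S

theorem genCoord_liftEta_X {J : Finset ℕ} {d j : ℕ} (hj : j ∉ J)
    (S : {S : Finset ℕ // S ⊆ J ∧ S.card = d}) :
    genCoord (insert j J) (d + 1) (liftEta J d j (X S)) =
      (Matrix.of fun i m : Fin (d + 1) =>
        X ((i : ℕ), Fin.snoc (fun k => (S.1.orderEmbOfFin S.2.2 k : ℕ)) j m)).det := by
  have hS : ∀ k, S.1.orderEmbOfFin S.2.2 k ∈ J := fun k => S.2.1 (S.1.orderEmbOfFin_mem S.2.2 k)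
  rw [liftEta_X]
  refine genCoord_fbr (Fin.snoc_injective_of_injective (S.1.orderEmbOfFin S.2.2).injective ?_) ?_
  · rintro ⟨k, rfl⟩
    exact hj (hS k)
  · intro k
    induction k using Fin.lastCases <;> simp [hS]

theorem schurSubst_comp_genCoord {J : Finset ℕ} {d j : ℕ} (hd : 0 < d) (hj : j ∉ J) :
    (schurSubst d j).comp (genCoord J d) =
      (IsScalarTower.toAlgHom ℂ (MvPolynomial (ℕ × ℕ) ℂ) 𝕂).comp
        ((genCoord (insert j J) (d + 1)).comp (liftEta J d j)) := by
  ext S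
  rw [AlgHom.comp_apply, AlgHom.comp_apply, AlgHom.comp_apply, genCoord_liftEta_X hj,
    IsScalarTower.coe_toAlgHom', ← schurSubst_det hd, genCoord, aeval_X]

theorem lift_respects_bracket_ring_equality_general (J : Finset ℕ) (d : ℕ) (hd : 1 ≤ d)
    (j : ℕ) (hj : j ∉ J)
    (p q : BracketRing J d) (hpq : genCoord J d p = genCoord J d q) :
    genCoord (insert j J) (d + 1) (liftEta J d j p) =
      genCoord (insert j J) (d + 1) (liftEta J d j q) := by
  have h := congrArg (schurSubst d j) hpq
  simp only [← AlgHom.comp_apply, schurSubst_comp_genCoord hd hj] at h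
  exact IsFractionRing.injective _ 𝕂 (by simpa using h)

theorem lift_respects_bracket_ring_equality (J : Finset ℕ) (d : ℕ) (hd : 1 ≤ d)
    (hJ : d ≤ J.card) (j : ℕ) (hj : j ∉ J)
    (p q : BracketRing J d) (hpq : genCoord J d p = genCoord J d q) :
    genCoord (insert j J) (d + 1) (liftEta J d j p) =
      genCoord (insert j J) (d + 1) (liftEta J d j q) :=
  lift_respects_bracket_ring_equality_general J d hd j hj p q hpq
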